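/- Let p be a prime number, let m ≥ 1, and let G = G_1 × ⋯ × G_t where each G_i is a cyclic group of order n_i with fixed generator σ_i and p^m divides n_i for every i. Let M be a module over ℤ[G], let y ∈ M, and let κ = (k_1, …, k_t) be a multi-index with 0 ≤ k_i < p for all i (so k_i ≤ n_i − 1 automatically). Suppose that D_{κ'}·y ∈ p^m·M for every multi-index κ' with κ' ≤ κ componentwise and κ' ≠ κ. Then (σ_i − 1)·(D_κ·y) ∈ p^m·M for every i = 1, …, t; equivalently, the class of D_κ·y in M/p^m·M is fixed by the action of G. -/

import Mathlib

/-- The Darmon–Kolyvagin derivative in the `i`-th variable,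
`D_i^k := Σ_{j=k}^{n_i−1} C(j,k)·σ_i^j ∈ ℤ[G₁ × ⋯ × G_t]`,
where `σ_i` is viewed in the product group via `Pi.mulSingle`. -/
noncomputable def DKpi {ι : Type*} [DecidableEq ι]
    {G : ι → Type*} [∀ i, CommGroup (G i)]
    (σ : ∀ i, G i) (n : ι → ℕ) (i : ι) (k : ℕ) : MonoidAlgebra ℤ (∀ j, G j) :=
  ∑ j ∈ Finset.Icc k (n i - 1),
    MonoidAlgebra.single (Pi.mulSingle i (σ i) ^ j) (j.choose k : ℤ)

private lemma stmt8_choose_dvd {p m n k : ℕ} (hp : p.Prime) (hk : 1 ≤ k) (hkp : k < p)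
    (h : p ^ m ∣ n) : p ^ m ∣ n.choose k := by
  rcases Nat.eq_zero_or_pos n with rfl | hn
  · simp [Nat.choose_eq_zero_of_lt hk]
  · have key : n * (n - 1).choose (k - 1) = n.choose k * k := by
      have h2 := Nat.add_one_mul_choose_eq (n - 1) (k - 1)
      have e1 : n - 1 + 1 = n := Nat.succ_pred_eq_of_pos hn
      have e2 : k - 1 + 1 = k := Nat.succ_pred_eq_of_pos hk
      rwa [e1, e2] at h2
    have hdvd : p ^ m ∣ n.choose k * k := key ▸ Dvd.dvd.mul_right h _
    have hcop : Nat.Coprime (p ^ m) k :=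
      Nat.Coprime.pow_left m ((Nat.Prime.coprime_iff_not_dvd hp).mpr
        (fun hpd => absurd (Nat.le_of_dvd hk hpd) (not_le.mpr hkp)))
    exact (Nat.Coprime.dvd_of_dvd_mul_right hcop hdvd)

private lemma stmt8_tele {R : Type*} [CommRing R] (τ : R) (k : ℕ) (n : ℕ) :
    (τ - 1) * (∑ j ∈ Finset.range n, (j.choose (k + 1) : ℤ) • τ ^ j)
      + τ * (∑ j ∈ Finset.range n, (j.choose k : ℤ) • τ ^ j)
    = ((n.choose (k + 1) : ℤ)) • τ ^ n := by
  induction n with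
  | zero => simp
  | succ n ih =>
    rw [Finset.sum_range_succ, Finset.sum_range_succ]
    simp only [zsmul_eq_mul] at ih ⊢
    push_cast [Nat.choose_succ_succ] at ih ⊢
    linear_combination ih

private lemma stmt8_icc_range {R : Type*} [CommRing R] (τ : R) (n k : ℕ) (hn : 1 ≤ n) :
    ∑ j ∈ Finset.Icc k (n - 1), (j.choose k : ℤ) • τ ^ j
      = ∑ j ∈ Finset.range n, (j.choose k : ℤ) • τ ^ j := by
  apply Finset.sum_subset
  · intro j hj
    simp only [Finset.mem_Icc, Finset.mem_range] at hj ⊢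
    omega
  · intro j hj hnot
    simp only [Finset.mem_Icc, Finset.mem_range] at hj hnot
    have hjk : j < k := by omega
    simp [Nat.choose_eq_zero_of_lt hjk]

/-- Let `p` be prime, `m ≥ 1`, and `G = G₁ × ⋯ × G_t` with `G_i` cyclic of
order `n_i` generated by `σ_i` and `p^m ∣ n_i`. Let `M` be a `ℤ[G]`-module, `y ∈ M`, and let
`κ` be a multi-index with `κ i < p` for all `i`. If `D_{κ'}·y ∈ p^m·M` for all `κ' ≤ κ`
with `κ' ≠ κ`, then `(σ_i − 1)·(D_κ·y) ∈ p^m·M` for every `i`. -/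
theorem stmt8 {ι : Type*} [Fintype ι] [DecidableEq ι]
    (G : ι → Type*) [∀ i, CommGroup (G i)] [∀ i, Fintype (G i)]
    (p m : ℕ) (hp : p.Prime) (hm : 1 ≤ m)
    (n : ι → ℕ) (σ : ∀ i, G i)
    (hcard : ∀ i, Fintype.card (G i) = n i)
    (hgen : ∀ i, ∀ g : G i, g ∈ Subgroup.zpowers (σ i))
    (hdvd : ∀ i, p ^ m ∣ n i)
    (M : Type*) [AddCommGroup M] [Module (MonoidAlgebra ℤ (∀ i, G i)) M]
    (y : M) (κ : ι → ℕ) (hκ : ∀ i, κ i < p)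
    (hsmall : ∀ κ' : ι → ℕ, (∀ i, κ' i ≤ κ i) → κ' ≠ κ →
      ∃ z : M, (∏ i, DKpi σ n i (κ' i)) • y = (p : ℤ) ^ m • z) :
    ∀ i : ι, ∃ z : M,
      (MonoidAlgebra.single (Pi.mulSingle i (σ i)) (1 : ℤ) - 1) •
          ((∏ j, DKpi σ n j (κ j)) • y) = (p : ℤ) ^ m • z := by
  classical
  -- rewrite DKpi in smul-of-powers form
  have hDK : ∀ (j : ι) (k : ℕ), DKpi σ n j k =
      ∑ l ∈ Finset.Icc k (n j - 1),
        (l.choose k : ℤ) • (MonoidAlgebra.single (Pi.mulSingle j (σ j)) (1 : ℤ)) ^ l := by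
    intro j k
    unfold DKpi
    refine Finset.sum_congr rfl fun l _ => ?_
    rw [MonoidAlgebra.single_pow, one_pow, MonoidAlgebra.smul_single', mul_one]
  intro i
  set τ : MonoidAlgebra ℤ (∀ j, G j) :=
    MonoidAlgebra.single (Pi.mulSingle i (σ i)) (1 : ℤ) with hτdef
  have hn1 : 1 ≤ n i := by
    rw [← hcard i]; exact Fintype.card_pos
  have hτn : τ ^ (n i) = 1 := by
    have hσ : (σ i) ^ (n i) = 1 := by rw [← hcard i]; exact pow_card_eq_one
    have hμ : Pi.mulSingle i (σ i) ^ (n i) = (1 : ∀ j, G j) := by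
      ext j
      rcases eq_or_ne j i with rfl | h
      · simp [hσ]
      · simp [Pi.mulSingle_eq_of_ne h]
    rw [hτdef, MonoidAlgebra.single_pow, one_pow, hμ, MonoidAlgebra.one_def]
  set Q : MonoidAlgebra ℤ (∀ j, G j) :=
    ∏ j ∈ Finset.univ.erase i, DKpi σ n j (κ j) with hQdef
  have hsplit : (∏ j, DKpi σ n j (κ j)) = DKpi σ n i (κ i) * Q :=
    (Finset.mul_prod_erase Finset.univ _ (Finset.mem_univ i)).symm
  rcases Nat.eq_zero_or_eq_succ_pred (κ i) with hk0 | hksucc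
  · -- κ i = 0 : (τ - 1) * D_i^0 = τ^n - 1 = 0
    have hD0 : DKpi σ n i 0 = ∑ l ∈ Finset.range (n i), τ ^ l := by
      rw [hDK i 0, ← hτdef, stmt8_icc_range τ (n i) 0 hn1]
      simp
    have hzero : (τ - 1) * DKpi σ n i (κ i) = 0 := by
      rw [hk0, hD0, mul_comm, geom_sum_mul, hτn, sub_self]
    refine ⟨0, ?_⟩
    rw [smul_smul, hsplit, ← mul_assoc, hzero, zero_mul, zero_smul, smul_zero]
  · set k := (κ i) - 1 with hkdef
    have hk : κ i = k + 1 := hksucc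
    have hkp : k + 1 < p := hk ▸ hκ i
    -- the key ring identity
    have key : (τ - 1) * DKpi σ n i (κ i)
        = ((n i).choose (k + 1) : ℤ) • (1 : MonoidAlgebra ℤ (∀ j, G j))
          - τ * DKpi σ n i k := by
      rw [hk, hDK i (k + 1), hDK i k, ← hτdef,
        stmt8_icc_range τ (n i) (k + 1) hn1, stmt8_icc_range τ (n i) k hn1]
      have h := stmt8_tele τ k (n i)
      rw [hτn] at h
      simp only [zsmul_eq_mul] at h ⊢
      linear_combination h
    -- the smaller multi-index
    set κ' : ι → ℕ := Function.update κ i k with hκ'def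
    have hκ'le : ∀ j, κ' j ≤ κ j := by
      intro j
      by_cases hj : j = i
      · subst hj; simp [hκ'def, hk]
      · simp [hκ'def, Function.update_of_ne hj]
    have hκ'ne : κ' ≠ κ := by
      intro hc
      have := congrFun hc i
      simp [hκ'def, hk] at this
    obtain ⟨z', hz'⟩ := hsmall κ' hκ'le hκ'ne
    have hprod' : (∏ j, DKpi σ n j (κ' j)) = DKpi σ n i k * Q := by
      rw [← Finset.mul_prod_erase Finset.univ _ (Finset.mem_univ i)]
      congr 1
      · simp [hκ'def]
      · exact Finset.prod_congr rfl fun j hj => by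
          rw [hκ'def, Function.update_of_ne (Finset.mem_erase.mp hj).1]
    obtain ⟨c, hc⟩ := stmt8_choose_dvd hp (Nat.succ_le_succ (Nat.zero_le k)) hkp (hdvd i)
    refine ⟨(c : ℤ) • (Q • y) - τ • z', ?_⟩
    have step1 : (τ - 1) • ((∏ j, DKpi σ n j (κ j)) • y)
        = (((n i).choose (k + 1) : ℤ) • Q) • y - (τ * (DKpi σ n i k * Q)) • y := by
      rw [smul_smul, hsplit, ← mul_assoc, key, sub_mul, smul_mul_assoc, one_mul, mul_assoc,
        sub_smul]
    rw [step1]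
    have t1 : (((n i).choose (k + 1) : ℤ) • Q) • y
        = (p : ℤ) ^ m • ((c : ℤ) • (Q • y)) := by
      rw [smul_assoc, hc]
      push_cast
      rw [mul_smul]
    have t2 : (τ * (DKpi σ n i k * Q)) • y = (p : ℤ) ^ m • (τ • z') := by
      rw [← hprod', mul_smul, hz', smul_comm]
    rw [t1, t2, ← smul_sub]
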